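/- Any rational numbers $Q_j, u_j, d_j, L_j, e_j, \nu_j$ ($j=1,2,3$), $H_1, H_2$ satisfying the seesaw 2HDM system (†) are uniquely determined: $Q = (\tfrac{274}{135}, \tfrac{139}{135}, -\tfrac{131}{135})$, $u = (\tfrac{364}{135}, \tfrac{94}{135}, -\tfrac{176}{135})$, $d = (-\tfrac{64}{45}, -\tfrac{109}{45}, -\tfrac{109}{45})$, $L = (-\tfrac{232}{135}, -\tfrac{307}{135}, -\tfrac{307}{135})$, $e = (\tfrac{449}{135}, -\tfrac{16}{135}, -\tfrac{151}{135})$, $\nu = (1, 0, 0)$, $H_1 = -\tfrac{863}{135}$, $H_2 = \tfrac{307}{135}$. -/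

import Mathlib

/-- The seesaw 2HDM system (†): anomaly conditions (with the cubic and gravitational
anomalies assumed to vanish by SM-neutral fermion content), no kinetic mixing, and the
Froggatt-Nielsen phenomenological constraints including the seesaw neutrino sector. -/
def SystemDagger (Q u d L e ν : Fin 3 → ℚ) (H₁ H₂ : ℚ) : Prop :=
  (∑ j, (Q j ^ 2 - 2 * u j ^ 2 + d j ^ 2 - L j ^ 2 + e j ^ 2)) = 0 ∧
  (∑ j, (Q j + 8 * u j + 2 * d j + 3 * L j + 6 * e j)) = 0 ∧
  (∑ j, (2 * Q j + u j + d j)) = 0 ∧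
  (∑ j, (3 * Q j + L j)) = 0 ∧
  (∑ j, (2 * Q j - 4 * u j + 2 * d j - 2 * L j + 2 * e j)) = 0 ∧
  Q 2 + u 2 + H₂ = 0 ∧ Q 1 + u 1 + H₂ = 4 ∧ Q 0 + u 0 + H₂ = 7 ∧
  Q 2 + d 2 - H₁ = 3 ∧ Q 1 + d 1 - H₁ = 5 ∧ Q 0 + d 0 - H₁ = 7 ∧
  L 2 + e 2 - H₁ = 3 ∧ L 1 + e 1 - H₁ = 4 ∧ L 0 + e 0 - H₁ = 8 ∧
  Q 0 - Q 1 = 1 ∧ Q 1 - Q 2 = 2 ∧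
  L 1 - L 2 = 0 ∧ L 1 + ν 1 + H₂ = 0 ∧
  ν 0 = 1 ∧ ν 1 = 0 ∧ ν 2 = 0

/-!
The linear equations (ii)–(vi) leave exactly one degree of freedom, which can be taken to be
`H₂ = t`: every charge is then an affine function of `t`. Along this line the `t²`-terms of the
quadratic equation (i) cancel, so (i) becomes the affine equation `307/3 - 45 t = 0`, which
fixes `t = 307/135` and with it all charges.
-/

namespace SystemDagger

def lineQ (t : ℚ) : Fin 3 → ℚ := ![19/6 - t/2, 13/6 - t/2, 1/6 - t/2]

def lineU (t : ℚ) : Fin 3 → ℚ := ![23/6 - t/2, 11/6 - t/2, -1/6 - t/2]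

def lineD (t : ℚ) : Fin 3 → ℚ := ![-29/6 + 3*t/2, -35/6 + 3*t/2, -35/6 + 3*t/2]

def lineL (t : ℚ) : Fin 3 → ℚ := ![-33/2 + 13*t/2, -t, -t]

def lineE (t : ℚ) : Fin 3 → ℚ := ![95/6 - 11*t/2, -14/3 + 2*t, -17/3 + 2*t]

theorem eq_line {Q u d L e ν : Fin 3 → ℚ} {H₁ H₂ : ℚ} (h : SystemDagger Q u d L e ν H₁ H₂) :
    Q = lineQ H₂ ∧ u = lineU H₂ ∧ d = lineD H₂ ∧ L = lineL H₂ ∧ e = lineE H₂ ∧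
      ν = ![1, 0, 0] ∧ H₁ = H₂ - 26/3 := by
  obtain ⟨-, h₂, h₃, h₄, h₅, hu₂, hu₁, hu₀, hd₂, hd₁, hd₀, he₂, he₁, he₀, hQ₀₁, hQ₁₂, hL₁₂, hν₁',
    hν₀, hν₁, hν₂⟩ := h
  simp only [Fin.sum_univ_three] at h₂ h₃ h₄ h₅
  refine ⟨?_, ?_, ?_, ?_, ?_, ?_, by linarith⟩ <;> ext j <;> fin_cases j <;>
    simp only [Fin.zero_eta, Fin.mk_one, Fin.reduceFinMk, Fin.isValue, Matrix.cons_val_zero,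
      Matrix.cons_val_one, Matrix.cons_val, lineQ, lineU, lineD, lineL, lineE] <;> linarith

theorem quadraticAnomaly_line (t : ℚ) :
    ∑ j, (lineQ t j ^ 2 - 2 * lineU t j ^ 2 + lineD t j ^ 2 - lineL t j ^ 2 + lineE t j ^ 2) =
      307/3 - 45 * t := by
  simp only [Fin.sum_univ_three, lineQ, lineU, lineD, lineL, lineE, Fin.isValue,
    Matrix.cons_val_zero, Matrix.cons_val_one, Matrix.cons_val]
  ring

end SystemDagger

/-- Any rational solution of the seesaw 2HDM system (†) is uniquely determined. -/
theorem systemDagger_unique (Q u d L e ν : Fin 3 → ℚ) (H₁ H₂ : ℚ)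
    (h : SystemDagger Q u d L e ν H₁ H₂) :
    Q = ![274/135, 139/135, -131/135] ∧ u = ![364/135, 94/135, -176/135] ∧
    d = ![-64/45, -109/45, -109/45] ∧ L = ![-232/135, -307/135, -307/135] ∧
    e = ![449/135, -16/135, -151/135] ∧ ν = ![1, 0, 0] ∧
    H₁ = -863/135 ∧ H₂ = 307/135 := by
  obtain ⟨rfl, rfl, rfl, rfl, rfl, rfl, rfl⟩ := h.eq_line
  have hH₂ : H₂ = 307/135 := by
    have h₁ := h.1
    rw [SystemDagger.quadraticAnomaly_line] at h₁
    linarith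
  subst hH₂
  refine ⟨?_, ?_, ?_, ?_, ?_, rfl, by norm_num, rfl⟩ <;>
    norm_num [SystemDagger.lineQ, SystemDagger.lineU, SystemDagger.lineD, SystemDagger.lineL,
      SystemDagger.lineE]
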